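/- arXiv:2505.08000 — 4 statements merged into one kernel-verified Lean document; each statement's English description precedes it below -/
import Mathlib

section
/- Let q = p^e with p prime, let k ≥ 2, let i ≠ j be indices in {0,1,…,k−1}, and set t = 2e − 1. Then for any choice of (not necessarily distinct) points α_1,…,α_t ∈ F_q^* and coefficients γ_1,…,γ_t ∈ F_q, there is no function R : F_p^t → F_q such that R( Tr(γ_1·f(α_1)), …, Tr(γ_t·f(α_t)) ) = f_i · f_j for every polynomial f = Σ_{z=0}^{k−1} f_z x^z ∈ F_q[x] of degree less than k. -/
/-- The absolute trace `Tr(x) = x + x^p + ⋯ + x^{p^{e-1}}` of `F_{p^e}`,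
viewed as taking values in `F` (its values lie in the prime subfield). -/
def Tr (p e : ℕ) {F : Type*} [Field F] (x : F) : F :=
  ∑ w ∈ Finset.range e, x ^ p ^ w

lemma Tr_add {F : Type*} [Field F] (p e : ℕ) [hpp : Fact p.Prime] [CharP F p] (x y : F) :
    Tr p e (x + y) = Tr p e x + Tr p e y := by
  haveI : ExpChar F p := .prime hpp.out
  unfold Tr
  rw [← Finset.sum_add_distrib]
  exact Finset.sum_congr rfl fun w _ => add_pow_char_pow ..

lemma Tr_pow_p {F : Type*} [Field F] [Fintype F] (p e : ℕ) [hpp : Fact p.Prime] [CharP F p]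
    (hcard : Fintype.card F = p ^ e) (x : F) : (Tr p e x) ^ p = Tr p e x := by
  haveI : ExpChar F p := .prime hpp.out
  have h1 : (Tr p e x) ^ p = ∑ w ∈ Finset.range e, x ^ p ^ (w + 1) := by
    unfold Tr
    rw [sum_pow_char]
    exact Finset.sum_congr rfl fun w _ => by rw [← pow_mul, ← pow_succ]
  have hxe : x ^ p ^ e = x := by rw [← hcard]; exact FiniteField.pow_card x
  have h2 : (∑ w ∈ Finset.range e, x ^ p ^ (w + 1)) + x ^ p ^ 0 =
      Tr p e x + x ^ p ^ e :=
    (Finset.sum_range_succ' (fun w => x ^ p ^ w) e).symm.trans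
      (Finset.sum_range_succ (fun w => x ^ p ^ w) e)
  rw [pow_zero, pow_one, hxe] at h2
  have := add_right_cancel h2
  rw [h1, this]

/-- With `t = 2e - 1`, for any points `α_1,…,α_t ∈ F_q^*` and coefficients
`γ_1,…,γ_t ∈ F_q`, no reconstruction function `R` can recover `f_i · f_j` from the values
`Tr(γ_z · f(α_z))` for all polynomials `f` of degree `< k` (identified with coefficient
vectors `f : Fin k → F`). -/
theorem no_linear_leakage_qm
    (F : Type*) [Field F] [Fintype F] (p e : ℕ) (hp : p.Prime)
    (hcard : Fintype.card F = p ^ e)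
    (k : ℕ) (hk : 2 ≤ k) (i j : Fin k) (hij : i ≠ j)
    (t : ℕ) (ht : t = 2 * e - 1)
    (α γ : Fin t → F) (hα : ∀ z : Fin t, α z ≠ 0) :
    ¬ ∃ R : (Fin t → F) → F,
        ∀ f : Fin k → F,
          R (fun z => Tr p e (γ z * ∑ w : Fin k, f w * (α z) ^ (w : ℕ))) = f i * f j := by
  rintro ⟨R, hR⟩
  haveI := Fact.mk hp
  haveI : DecidableEq F := Classical.decEq F
  -- characteristic of F is p
  haveI : CharP F (ringChar F) := ringChar.charP F
  obtain ⟨n, hrp, hn⟩ := FiniteField.card F (ringChar F)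
  have h1lt : 1 < Fintype.card F := Fintype.one_lt_card
  have he : 1 ≤ e := by
    rcases Nat.eq_zero_or_pos e with h | h
    · rw [h, pow_zero] at hcard; omega
    · exact h
  have hpr : p = ringChar F := by
    have hd : p ∣ ringChar F ^ (n : ℕ) := by
      rw [← hn, hcard]; exact dvd_pow_self p (by omega)
    exact (Nat.prime_dvd_prime_iff_eq hp hrp).mp (hp.dvd_of_dvd_pow hd)
  haveI hcharp : CharP F p := hpr ▸ ringChar.charP F
  -- the set of roots of X^p - X, containing all trace values
  set P : Polynomial F := Polynomial.X ^ p - Polynomial.X with hP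
  have hPne : P ≠ 0 := by
    intro h
    have : P.coeff p = 1 := by
      simp [hP, Polynomial.coeff_X_pow, Polynomial.coeff_X]
      exact Nat.ne_of_lt hp.one_lt
    rw [h] at this
    simp at this
  have hTrmem : ∀ x : F, Tr p e x ∈ P.roots.toFinset := by
    intro x
    rw [Multiset.mem_toFinset, Polynomial.mem_roots hPne]
    simp [hP, Polynomial.IsRoot, sub_eq_zero, Tr_pow_p p e hcard x]
  have hScard : P.roots.toFinset.card ≤ p := by
    calc P.roots.toFinset.card ≤ Multiset.card P.roots := Multiset.toFinset_card_le _
      _ ≤ P.natDegree := Polynomial.card_roots' P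
      _ ≤ p := by
          refine le_trans (Polynomial.natDegree_sub_le _ _) ?_
          simp [Polynomial.natDegree_X_pow, Polynomial.natDegree_X, hp.one_lt.le]
  -- the coefficient-vector family
  set g : F → F → (Fin k → F) := fun a b w => if w = i then a else if w = j then b else 0 with hg
  -- pigeonhole map
  set Ψ : F × F → (Fin t → ↥P.roots.toFinset) := fun ab z =>
    ⟨Tr p e (γ z * ∑ w : Fin k, g ab.1 ab.2 w * (α z) ^ (w : ℕ)), hTrmem _⟩ with hΨ
  have hlt : Fintype.card (Fin t → ↥P.roots.toFinset) < Fintype.card (F × F) := by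
    rw [Fintype.card_fun, Fintype.card_coe, Fintype.card_fin, Fintype.card_prod, hcard]
    calc P.roots.toFinset.card ^ t ≤ p ^ t := Nat.pow_le_pow_left hScard t
      _ < p ^ (2 * e) := Nat.pow_lt_pow_right hp.one_lt (by omega)
      _ = p ^ e * p ^ e := by rw [← pow_add, two_mul]
  obtain ⟨x, y, hxy, heq⟩ := Fintype.exists_ne_map_eq_of_card_lt Ψ hlt
  -- pointwise additivity of g
  have hgadd : ∀ u v a b : F, g (u + a) (v + b) = fun w => g u v w + g a b w := by
    intro u v a b
    funext w
    simp only [hg]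
    split_ifs <;> ring
  have hgi : ∀ a b : F, g a b i = a := by intro a b; simp [hg]
  have hgj : ∀ a b : F, g a b j = b := by
    intro a b; simp [hg, (Ne.symm hij)]
  -- equal leakage for shifted polynomials
  have key : ∀ u v : F, (u + x.1) * (v + x.2) = (u + y.1) * (v + y.2) := by
    intro u v
    have leak : ∀ a b : F, ((fun z => Tr p e (γ z *
        ∑ w : Fin k, g (u + a) (v + b) w * (α z) ^ (w : ℕ))) : Fin t → F) =
        fun z => Tr p e (γ z * ∑ w : Fin k, g u v w * (α z) ^ (w : ℕ)) +
          Tr p e (γ z * ∑ w : Fin k, g a b w * (α z) ^ (w : ℕ)) := by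
      intro a b
      funext z
      rw [hgadd]
      rw [show (∑ w : Fin k, (g u v w + g a b w) * (α z) ^ (w : ℕ)) =
          (∑ w : Fin k, g u v w * (α z) ^ (w : ℕ)) +
          ∑ w : Fin k, g a b w * (α z) ^ (w : ℕ) by
        rw [← Finset.sum_add_distrib]; exact Finset.sum_congr rfl fun w _ => add_mul ..]
      rw [mul_add, Tr_add]
    have hx := hR (g (u + x.1) (v + x.2))
    have hy := hR (g (u + y.1) (v + y.2))
    rw [hgi, hgj] at hx hy
    rw [leak x.1 x.2] at hx
    rw [leak y.1 y.2] at hy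
    have hTreq : ∀ z : Fin t,
        Tr p e (γ z * ∑ w : Fin k, g x.1 x.2 w * (α z) ^ (w : ℕ)) =
        Tr p e (γ z * ∑ w : Fin k, g y.1 y.2 w * (α z) ^ (w : ℕ)) := by
      intro z
      have := congrFun heq z
      simpa [hΨ, Subtype.ext_iff] using this
    rw [← hx, ← hy]
    congr 1
    funext z
    rw [hTreq z]
  have h2 : x.2 = y.2 := by linear_combination key 1 0 - key 0 0
  have h1 : x.1 = y.1 := by linear_combination key 0 1 - key 0 0
  exact hxy (Prod.ext h1 h2)
end

section
/- Let q = p^e with p an odd prime, and assume −1 ∈ QR_q (equivalently, p ≡ 1 (mod 4) or e is even). Let a ∈ QR_q and b ∈ F_q^* \ QR_q, for each γ ∈ R_q(4) fix s(γ) ∈ QR_q with s(γ)² = γ, and set Υ := { (a/b)·s(γ) : γ ∈ R_q(4) }. Then for every ω ∈ QR_q \ R_q(4) there exists g ∈ F_q^* with g² = ω and g ∉ QR_q ∪ Υ. -/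
/-- The quadratic residues `QR_q = { x² : x ∈ F_q^* }`. -/
def QR (F : Type*) [Field F] : Set F :=
  {y : F | ∃ x : F, x ≠ 0 ∧ y = x ^ 2}

/-- The quartic residues `R_q(4) = { x⁴ : x ∈ F_q^* }`. -/
def R4 (F : Type*) [Field F] : Set F :=
  {y : F | ∃ x : F, x ≠ 0 ∧ y = x ^ 4}

/-- The set `Υ = { (a/b)·s(γ) : γ ∈ R_q(4) }`. -/
def Ups (F : Type*) [Field F] (a b : F) (s : F → F) : Set F :=
  {y : F | ∃ γ ∈ R4 F, y = a / b * s γ}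

/-- If `-1 ∈ QR_q` (with `p` odd), then for every
`ω ∈ QR_q \ R_q(4)` there exists a square root `g` of `ω` with `g ∉ QR_q ∪ Υ`. -/
theorem nonquartic_sqrt_avoiding_Ups
    (F : Type*) [Field F] [Fintype F] (p e : ℕ) (hp : p.Prime) (hodd : Odd p)
    (hcard : Fintype.card F = p ^ e)
    (hneg : (-1 : F) ∈ QR F)
    (a b : F) (ha : a ∈ QR F) (hb : b ≠ 0) (hbQR : b ∉ QR F)
    (s : F → F) (hs : ∀ γ ∈ R4 F, s γ ∈ QR F ∧ (s γ) ^ 2 = γ) :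
    ∀ ω ∈ QR F \ R4 F,
      ∃ g : F, g ≠ 0 ∧ g ^ 2 = ω ∧ g ∉ QR F ∧ g ∉ Ups F a b s := by
  intro ω hω
  obtain ⟨hωQR, hωR4⟩ := hω
  obtain ⟨x, hx0, hxω⟩ := hωQR
  obtain ⟨c, hc0, hc⟩ := hneg
  -- characteristic facts: (2 : F) ≠ 0
  have hcardF : ((Fintype.card F : ℕ) : F) = 0 := FiniteField.cast_card_eq_zero F
  have he : e ≠ 0 := by
    rintro rfl
    have := Fintype.one_lt_card (α := F)
    simp [hcard] at this
  have hp0 : (p : F) = 0 := by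
    rw [hcard] at hcardF
    push_cast at hcardF
    rcases pow_eq_zero_iff he |>.mp hcardF with h
    exact h
  have h2 : (2 : F) ≠ 0 := by
    intro h2
    obtain ⟨k, hk⟩ := hodd
    have : ((2 * k + 1 : ℕ) : F) = 0 := by rw [← hk]; exact hp0
    push_cast at this
    rw [h2] at this
    simp at this
  have hxne : x ≠ -x := by
    intro h
    have : 2 * x = 0 := by linear_combination h
    rcases mul_eq_zero.mp this with h' | h'
    · exact h2 h'
    · exact hx0 h'
  -- x ∉ QR
  have hxQR : x ∉ QR F := by
    rintro ⟨y, hy0, rfl⟩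
    exact hωR4 ⟨y, hy0, by rw [hxω]; ring⟩
  -- -x ∉ QR
  have hnxQR : (-x) ∉ QR F := by
    rintro ⟨y, hy0, hy⟩
    apply hxQR
    refine ⟨c * y, mul_ne_zero hc0 hy0, ?_⟩
    have : x = -(-x) := by ring
    rw [this, hy, mul_pow, ← hc]
    ring
  -- at most one of x, -x is in Ups
  have hd0 : a / b ≠ 0 := by
    obtain ⟨t, ht0, rfl⟩ := ha
    exact div_ne_zero (pow_ne_zero 2 ht0) hb
  by_cases hU : x ∈ Ups F a b s
  · refine ⟨-x, neg_ne_zero.mpr hx0, by rw [neg_pow, hxω]; ring, hnxQR, ?_⟩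
    rintro ⟨γ₂, hγ₂, hg2⟩
    obtain ⟨γ₁, hγ₁, hg1⟩ := hU
    have hs1 := hs γ₁ hγ₁
    have hs2 := hs γ₂ hγ₂
    have hγeq : γ₁ = γ₂ := by
      have e1 : (a / b) ^ 2 * γ₁ = ω := by
        rw [← hs1.2, ← mul_pow, ← hg1, hxω]
      have e2 : (a / b) ^ 2 * γ₂ = ω := by
        rw [← hs2.2, ← mul_pow, ← hg2, hxω]; ring
      have := e1.trans e2.symm
      exact mul_left_cancel₀ (pow_ne_zero 2 hd0) this
    apply hxne
    rw [hγeq] at hg1; exact hg1.trans hg2.symm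
  · exact ⟨x, hx0, hxω.symm, hxQR, hU⟩
end

section
/- Let q = p^e with either p an odd prime and q ≠ 5, or p = 2 and e ≥ 3. Let Ω_q ⊆ F_q^* be QR_q := {x² : x ∈ F_q^*} when p is odd, and W_q := {ω^{2i} : 0 ≤ i ≤ 2^{e−1} − 2} for a primitive ω ∈ F_q^* with Tr(ω^{-1}) = 0 when p = 2. Let r : Ω_q → F_q^* with r(γ)² = γ for all γ, and let a ∈ Ω_q ∩ B_1(1) and b ∈ (F_q^* \ Ω_q) ∩ B_1(1) be such that for every δ ∈ Ω_q, |⋃_{γ ∈ Ω_q, γ ≠ δ} {r(γ)·a, r(γ)·b}| equals q − 3 (p odd) or q − 4 (p = 2). Let t be a positive integer, let V_1,…,V_t ⊆ F_q, b ∈ {0,1}^t, and for each i set W_i := V_i if b_i = 0 and W_i := F_q^* \ V_i if b_i = 1; for γ ∈ Ω_q define S_γ := B_1(1) \ ⋃_{i=1}^t r(γ)^{-1}·W_i. Suppose there is a unique δ ∈ Ω_q with S_δ ≠ ∅ (i.e., S_γ = ∅ for all γ ∈ Ω_q with γ ≠ δ, and S_δ ≠ ∅). Then |S_δ| ≤ 2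 when p is odd, and |S_δ| ≤ 3 when p = 2. -/
/-- The set `B_1(1) = { m + m⁻¹ : m ∈ F_q^* }`. -/
def B11 (F : Type*) [Field F] : Set F :=
  {y : F | ∃ m : F, m ≠ 0 ∧ y = m + m⁻¹}

/-- `W_q = { ω^{2i} : 0 ≤ i ≤ 2^{e-1} - 2 }`. -/
def Wset (F : Type*) [Field F] (e : ℕ) (ω : F) : Set F :=
  {y : F | ∃ i : ℕ, i ≤ 2 ^ (e - 1) - 2 ∧ y = ω ^ (2 * i)}

/-- The final state `S_γ` of the pQM pruning algorithm with leakage sets `V_1,…,V_t`,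
transcript `bv ∈ {0,1}^t`, and square root `rγ` of `γ`:
`S_γ = B_1(1) \ ⋃_i rγ⁻¹·W_i`, where `W_i = V_i` if `bv i = 0` and
`W_i = F_q^* \ V_i` if `bv i = 1`. -/
def finalState {F : Type*} [Field F] {t : ℕ} (rγ : F) (V : Fin t → Set F)
    (bv : Fin t → Bool) : Set F :=
  B11 F \ ⋃ i : Fin t,
    (fun x => rγ⁻¹ * x) '' (if bv i then {x : F | x ≠ 0} \ V i else V i)

/-- If the pQM pruning algorithm ends with a unique `δ ∈ Ω_q`
whose final state `S_δ` is nonempty, then `|S_δ| ≤ 2` when `p` is odd and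
`|S_δ| ≤ 3` when `p = 2`. -/
theorem pQM_final_state_small
    (F : Type*) [Field F] [Fintype F] (p e : ℕ) (hp : p.Prime)
    (hcard : Fintype.card F = p ^ e)
    (hcase : (Odd p ∧ p ^ e ≠ 5) ∨ (p = 2 ∧ 3 ≤ e))
    (Ω : Set F)
    (hΩodd : Odd p → Ω = QR F)
    (hΩeven : p = 2 → ∃ ω : F, orderOf ω = p ^ e - 1 ∧ Tr p e ω⁻¹ = 0 ∧ Ω = Wset F e ω)
    (r : F → F) (hr : ∀ γ ∈ Ω, r γ ≠ 0 ∧ (r γ) ^ 2 = γ)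
    (a b : F) (ha : a ∈ Ω) (haB : a ∈ B11 F)
    (hb : b ≠ 0) (hbΩ : b ∉ Ω) (hbB : b ∈ B11 F)
    (hunion : ∀ δ ∈ Ω,
      (Odd p → (⋃ γ ∈ Ω \ {δ}, ({r γ * a, r γ * b} : Set F)).ncard = p ^ e - 3) ∧
      (p = 2 → (⋃ γ ∈ Ω \ {δ}, ({r γ * a, r γ * b} : Set F)).ncard = p ^ e - 4))
    (t : ℕ) (ht : 0 < t)
    (V : Fin t → Set F) (bv : Fin t → Bool)
    (δ : F) (hδ : δ ∈ Ω)
    (hδne : finalState (r δ) V bv ≠ ∅)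
    (huniq : ∀ γ ∈ Ω, γ ≠ δ → finalState (r γ) V bv = ∅) :
    (Odd p → (finalState (r δ) V bv).ncard ≤ 2) ∧
    (p = 2 → (finalState (r δ) V bv).ncard ≤ 3) := by
  classical
  obtain ⟨hrδ0, hrδ2⟩ := hr δ hδ
  set WW : Fin t → Set F := fun i => if bv i then {x : F | x ≠ 0} \ V i else V i with hWW
  have hfs : ∀ γ, finalState (r γ) V bv
      = B11 F \ ⋃ i : Fin t, (fun x => (r γ)⁻¹ * x) '' WW i := fun _ => rfl
  set S : Set F := finalState (r δ) V bv with hSdef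
  set T : Set F := ⋃ γ ∈ Ω \ {δ}, ({r γ * a, r γ * b} : Set F) with hT
  -- e ≥ 1
  have he1 : 1 ≤ e := by
    by_contra h
    have : e = 0 := by omega
    have h2 := Fintype.one_lt_card (α := F)
    rw [hcard, this, pow_zero] at h2
    omega
  -- key1 : leaked values land in some WW i
  have key1 : ∀ γ ∈ Ω, γ ≠ δ → ∀ c ∈ B11 F, ∃ i : Fin t, r γ * c ∈ WW i := by
    intro γ hγ hγδ c hc
    have hempty := huniq γ hγ hγδ
    rw [hfs] at hempty
    have hcU : c ∈ ⋃ i : Fin t, (fun x => (r γ)⁻¹ * x) '' WW i := by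
      by_contra hcU
      have : c ∈ (∅ : Set F) := hempty ▸ ⟨hc, hcU⟩
      exact this
    obtain ⟨U, ⟨i, rfl⟩, hcUi⟩ := hcU
    obtain ⟨x, hx, hxc⟩ := hcUi
    refine ⟨i, ?_⟩
    have : r γ * c = x := by
      rw [← hxc]; exact mul_inv_cancel_left₀ (hr γ hγ).1 x
    rwa [this]
  -- key2 : anything in some WW i is excluded from S after scaling
  have key2 : ∀ y : F, (∃ i : Fin t, y ∈ WW i) → (r δ)⁻¹ * y ∉ S := by
    rintro y ⟨i, hy⟩ hyS
    rw [hSdef, hfs] at hyS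
    exact hyS.2 (Set.mem_iUnion.mpr ⟨i, ⟨y, hy, rfl⟩⟩)
  -- scaled S is disjoint from T
  have hdisjT : ∀ s ∈ S, r δ * s ∉ T := by
    intro s hs hsT
    rw [hT] at hsT
    obtain ⟨γ, hγ, hmem⟩ := Set.mem_iUnion₂.mp hsT
    obtain ⟨hγΩ, hγδ⟩ := hγ
    have hγδ' : γ ≠ δ := hγδ
    have hc : ∃ c ∈ B11 F, r δ * s = r γ * c := by
      rcases hmem with h | h
      · exact ⟨a, haB, h⟩
      · exact ⟨b, hbB, h⟩
    obtain ⟨c, hcB, hceq⟩ := hc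
    obtain ⟨i, hi⟩ := key1 γ hγΩ hγδ' c hcB
    rw [← hceq] at hi
    have := key2 (r δ * s) ⟨i, hi⟩
    rw [inv_mul_cancel_left₀ hrδ0] at this
    exact this hs
  -- a ≠ 0
  have hΩne0 : ∀ γ ∈ Ω, γ ≠ 0 := by
    intro γ hγ h0
    subst h0
    exact (hr 0 hγ).1 ((pow_eq_zero_iff two_ne_zero).mp (hr 0 hγ).2)
  have hane : a ≠ 0 := hΩne0 a ha
  -- 0 ∉ T
  have hT0 : (0 : F) ∉ T := by
    intro h0
    rw [hT] at h0
    obtain ⟨γ, hγ, hmem⟩ := Set.mem_iUnion₂.mp h0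
    rcases hmem with h | h
    · exact mul_ne_zero (hr γ hγ.1).1 hane h.symm
    · exact mul_ne_zero (hr γ hγ.1).1 hb h.symm
  -- if some γ ∈ Ω, γ ≠ δ exists and 0 ∈ B11, then 0 ∉ S
  have key3 : (∃ γ ∈ Ω, γ ≠ δ) → (0 : F) ∈ B11 F → (0 : F) ∉ S := by
    rintro ⟨γ, hγ, hγδ⟩ h0B h0S
    obtain ⟨i, hi⟩ := key1 γ hγ hγδ 0 h0B
    rw [mul_zero] at hi
    have := key2 0 ⟨i, hi⟩
    rw [mul_zero] at this
    exact this h0S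
  -- the image of S
  set M : Set F := (fun x => r δ * x) '' S with hM
  have hMcard : M.ncard = S.ncard :=
    Set.ncard_image_of_injective S (mul_right_injective₀ hrδ0)
  -- generic counting bound given 0 ∉ S
  have count : (0 : F) ∉ S → S.ncard + T.ncard + 1 ≤ p ^ e := by
    intro h0S
    have hdisj2 : Disjoint M (insert 0 T) := by
      rw [Set.disjoint_left]
      rintro y ⟨s, hs, rfl⟩ hyins
      rcases hyins with h | h
      · rcases mul_eq_zero.mp h with h' | h'
        · exact hrδ0 h'
        · exact h0S (h' ▸ hs)
      · exact hdisjT s hs h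
    have hun : (M ∪ insert 0 T).ncard = M.ncard + (insert 0 T).ncard :=
      Set.ncard_union_eq hdisj2 (Set.toFinite _) (Set.toFinite _)
    have hins : (insert 0 T).ncard = T.ncard + 1 :=
      Set.ncard_insert_of_notMem hT0 (Set.toFinite _)
    have hle : (M ∪ insert 0 T).ncard ≤ p ^ e := by
      have := Set.ncard_le_ncard (Set.subset_univ (M ∪ insert 0 T)) (Set.toFinite _)
      rwa [Set.ncard_univ, Nat.card_eq_fintype_card, hcard] at this
    omega
  rcases hcase with ⟨hodd, hq5⟩ | ⟨hp2, he3⟩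
  · -- odd case
    constructor
    swap
    · intro hp2; exact absurd (hp2 ▸ hodd) (by decide)
    intro _
    have hΩQR := hΩodd hodd
    have hp3 : 3 ≤ p := by
      have := hp.two_le
      rcases Nat.lt_or_ge p 3 with h | h
      · interval_cases p
        · exact absurd hodd (by decide)
      · exact h
    have hq3 : 3 ≤ p ^ e := le_trans hp3 (Nat.le_self_pow (by omega) p)
    have hTc : T.ncard = p ^ e - 3 := (hunion δ hδ).1 hodd
    -- 0 ∉ S
    have h0S : (0 : F) ∉ S := by
      intro h0S
      have h0B : (0 : F) ∈ B11 F := by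
        rw [hSdef, hfs] at h0S; exact h0S.1
      -- -1 is a square
      obtain ⟨m, hm0, hm⟩ := id h0B
      have hmsq : m ^ 2 = -1 := by
        have h : m * (m + m⁻¹) = 0 := by rw [← hm, mul_zero]
        rw [mul_add, mul_inv_cancel₀ hm0] at h
        linear_combination h
      -- char ≠ 2
      have h2 : (2 : F) ≠ 0 := by
        intro h2
        have hpF : (p : F) = 0 := by
          have := FiniteField.cast_card_eq_zero F
          rw [hcard] at this
          push_cast at this
          exact pow_eq_zero_iff (by omega) |>.mp this
        obtain ⟨k, hk⟩ := hodd
        rw [hk] at hpF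
        push_cast at hpF
        rw [show (2 : F) * k + 1 = 2 * k + 1 by ring] at hpF
        rw [h2, zero_mul, zero_add] at hpF
        exact one_ne_zero hpF
      have hne11 : (1 : F) ≠ -1 := by
        intro h
        exact h2 (by linear_combination h)
      have h1Ω : (1 : F) ∈ Ω := by
        rw [hΩQR]; exact ⟨1, one_ne_zero, by ring⟩
      have hm1Ω : (-1 : F) ∈ Ω := by
        rw [hΩQR]; exact ⟨m, hm0, hmsq.symm⟩
      have hex : ∃ γ ∈ Ω, γ ≠ δ := by
        by_cases hδ1 : δ = 1
        · exact ⟨-1, hm1Ω, by rw [hδ1]; exact fun h => hne11 h.symm⟩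
        · exact ⟨1, h1Ω, fun h => hδ1 h.symm⟩
      exact key3 hex h0B h0S
    have := count h0S
    omega
  · -- even case
    subst hp2
    constructor
    · intro hodd; exact absurd hodd (by decide)
    intro _
    have hq4 : 8 ≤ 2 ^ e := by
      calc (8 : ℕ) = 2 ^ 3 := by norm_num
      _ ≤ 2 ^ e := Nat.pow_le_pow_right (by norm_num) he3
    have hTc : T.ncard = 2 ^ e - 4 := (hunion δ hδ).2 rfl
    obtain ⟨ω, hω, htr, hΩW⟩ := hΩeven rfl
    have hωne : ω ≠ 0 := by
      intro h
      have h1 := pow_orderOf_eq_one ω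
      rw [hω] at h1
      rw [h, zero_pow (by omega)] at h1
      exact zero_ne_one h1
    have h1Ω : (1 : F) ∈ Ω := by
      rw [hΩW]; exact ⟨0, by omega, by simp⟩
    have hω2Ω : ω ^ 2 ∈ Ω := by
      rw [hΩW]
      refine ⟨1, ?_, by norm_num⟩
      have : 4 ≤ 2 ^ (e - 1) := by
        calc (4 : ℕ) = 2 ^ 2 := by norm_num
        _ ≤ 2 ^ (e - 1) := Nat.pow_le_pow_right (by norm_num) (by omega)
      omega
    have hω21 : ω ^ 2 ≠ 1 := by
      intro h
      have := orderOf_dvd_of_pow_eq_one h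
      rw [hω] at this
      have := Nat.le_of_dvd (by norm_num) this
      omega
    have h0S : (0 : F) ∉ S := by
      intro h0S
      have h0B : (0 : F) ∈ B11 F := by
        rw [hSdef, hfs] at h0S; exact h0S.1
      have hex : ∃ γ ∈ Ω, γ ≠ δ := by
        by_cases hδ1 : δ = 1
        · exact ⟨ω ^ 2, hω2Ω, by rw [hδ1]; exact hω21⟩
        · exact ⟨1, h1Ω, fun h => hδ1 h.symm⟩
      exact key3 hex h0B h0S
    have := count h0S
    omega
end

section
/- Let q = p^e with either p an odd prime and q ≠ 5, or p = 2 and e ≥ 3. Let Ω_q ⊆ F_q^* be QR_q := {x² : x ∈ F_q^*} when p is odd, and W_q := {ω^{2i} : 0 ≤ i ≤ 2^{e−1} − 2} for a primitive ω ∈ F_q^* with Tr(ω^{-1}) = 0 when p = 2. Let r : Ω_q → F_q^* with r(γ)² = γ for all γ, and let a ∈ Ω_q ∩ B_1(1) and b ∈ (F_q^* \ Ω_q) ∩ B_1(1) be such that for every δ ∈ Ω_q, |⋃_{γ ∈ Ω_q, γ ≠ δ} {r(γ)·a, r(γ)·b}| equals q − 3 (p odd) or q − 4 (p = 2). Let t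 be a positive integer and V_1,…,V_t ⊆ F_q, and suppose this sequence defines a t-valid pQM scheme: for every transcript b ∈ {0,1}^t, setting W_i := V_i if b_i = 0 and W_i := F_q^* \ V_i if b_i = 1 and S_γ(b) := B_1(1) \ ⋃_{i=1}^t r(γ)^{-1}·W_i for γ ∈ Ω_q, at most one γ ∈ Ω_q satisfies S_γ(b) ≠ ∅. Then t ≥ 2·log₂(q−1) − 3 when p is odd, and t ≥ 2·log₂(q−2) − 4 when p = 2. -/
/-! A pair `(γ, m)` with `γ ∈ Ω` and `m ∈ B_1(1) \ {0}` survives the pruning under the transcript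
of `r(γ)·m`, and validity makes that transcript determine `γ`. Unless `m ∈ {a, b}`, the point
`r(γ)·m` also determines `m` and lies outside `⋃_{γ' ∈ Ω} {r(γ')a, r(γ')b}`, which by the
cardinality hypothesis misses at most one nonzero point (none for odd `p`). Counting pairs gives
`|Ω|·|B_1(1) \ {0}| ≤ 2^t·2` for odd `p` and `≤ 2^t·3` for `p = 2`; since squaring and
`m ↦ m + m⁻¹` are at most two-to-one, each factor is at least `(q - 1)/2`, resp. `(q - 2)/2`. -/

section

open Set

lemma Set.ncard_le_two_mul_ncard_of_fibers {α β : Type*} {s : Set α} {t : Set β} {f : α → β}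
    (g : α → α) (hst : MapsTo f s t) (hfib : ∀ x ∈ s, ∀ y ∈ s, f y = f x → y = x ∨ y = g x)
    (hs : s.Finite := by toFinite_tac) (ht : t.Finite := by toFinite_tac) :
    s.ncard ≤ 2 * t.ncard := by
  classical
  rw [ncard_eq_toFinset_card s hs, ncard_eq_toFinset_card t ht]
  refine Finset.card_le_mul_card_image_of_maps_to
    (fun x hx => by simpa using hst (by simpa using hx)) 2 fun z _ => ?_
  rcases Finset.eq_empty_or_nonempty {x ∈ hs.toFinset | f x = z} with h | ⟨x, hx⟩
  · simp [h]
  obtain ⟨hxs, rfl⟩ := Finset.mem_filter.1 hx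
  calc _ ≤ ({x, g x} : Finset α).card := Finset.card_le_card fun y hy => by
          obtain ⟨hys, hyx⟩ := Finset.mem_filter.1 hy
          rcases hfib x (by simpa using hxs) y (by simpa using hys) hyx with rfl | rfl <;> simp
    _ ≤ 2 := Finset.card_le_two

lemma eq_or_eq_inv_of_add_inv_eq {F : Type*} [Field F] {u v : F} (hu : u ≠ 0) (hv : v ≠ 0)
    (h : v + v⁻¹ = u + u⁻¹) : v = u ∨ v = u⁻¹ := by
  have : (v - u) * (v * u - 1) = 0 := by
    field_simp at h
    linear_combination h
  rcases mul_eq_zero.1 this with h | h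
  · exact Or.inl (sub_eq_zero.1 h)
  · exact Or.inr (eq_inv_of_mul_eq_one_left (sub_eq_zero.1 h))

variable {F : Type*} [Field F] [Fintype F]

lemma ncard_setOf_ne_zero : {x : F | x ≠ 0}.ncard = Fintype.card F - 1 := by
  rw [← compl_ofPred, ofPred_eq_eq_singleton, ncard_compl, ncard_singleton,
    Nat.card_eq_fintype_card]

lemma card_sub_one_le_two_mul_ncard_QR : Fintype.card F - 1 ≤ 2 * (QR F).ncard := by
  rw [← ncard_setOf_ne_zero]
  refine ncard_le_two_mul_ncard_of_fibers (f := fun x : F => x ^ 2) (fun x => -x)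
    (fun x hx => ⟨x, hx, rfl⟩) fun x _ y _ h => ?_
  have : (y - x) * (y + x) = 0 := by linear_combination h
  rcases mul_eq_zero.1 this with h | h
  · exact Or.inl (sub_eq_zero.1 h)
  · exact Or.inr (eq_neg_of_add_eq_zero_left h)

lemma card_sub_two_le_two_mul_ncard_B11_diff_zero :
    Fintype.card F - 2 ≤ 2 * (B11 F \ {0}).ncard := by
  have htwo : (2 : F) ∈ B11 F := ⟨1, one_ne_zero, by norm_num⟩
  have hs : {m : F | m ≠ 0 ∧ m ≠ 1}.ncard = Fintype.card F - 2 := by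
    rw [show {m : F | m ≠ 0 ∧ m ≠ 1} = {0, 1}ᶜ by ext; simp, ncard_compl,
      ncard_pair zero_ne_one, Nat.card_eq_fintype_card]
  have hmaps : MapsTo (fun m : F => m + m⁻¹) {m | m ≠ 0 ∧ m ≠ 1} (B11 F \ {2}) := by
    rintro m ⟨hm0, hm1⟩
    refine ⟨⟨m, hm0, rfl⟩, fun h => hm1 ?_⟩
    have := eq_or_eq_inv_of_add_inv_eq one_ne_zero hm0 (h.trans (by norm_num))
    simpa using this
  have h2 : (B11 F \ {2}).ncard ≤ (B11 F \ {0}).ncard := by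
    rw [ncard_sdiff_singleton_of_mem htwo]
    exact pred_ncard_le_ncard_sdiff_singleton _ _
  have := ncard_le_two_mul_ncard_of_fibers (fun m => m⁻¹) hmaps
    fun x hx y hy h => eq_or_eq_inv_of_add_inv_eq hx.1 hy.1 h
  omega

lemma two_pow_sub_two_le_two_mul_ncard_Wset {e : ℕ} {ω : F} (hω : orderOf ω = 2 ^ e - 1) :
    2 ^ e - 2 ≤ 2 * (Wset F e ω).ncard := by
  rcases e with _ | e
  · simp
  have hmaps : MapsTo (fun i => ω ^ (2 * i)) (Iio (2 ^ e - 1)) (Wset F (e + 1) ω) :=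
    fun i hi => ⟨i, by simp at hi ⊢; omega, rfl⟩
  have hinj : InjOn (fun i => ω ^ (2 * i)) (Iio (2 ^ e - 1)) := by
    intro i hi j hj hij
    have hlt : ∀ k ∈ Iio (2 ^ e - 1), 2 * k ∈ Iio (orderOf ω) := fun k hk => by
      simp only [mem_Iio, hω, pow_succ] at hk ⊢
      omega
    simpa using pow_injOn_Iio_orderOf (hlt i hi) (hlt j hj) hij
  have := ncard_le_ncard_of_injOn _ hmaps hinj
  rw [← Finset.coe_range, ncard_coe_finset, Finset.card_range] at this
  rw [pow_succ]
  omega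

end

section

open Set

variable {F : Type*} [Field F] {t : ℕ}

open Classical in
noncomputable def transcript (V : Fin t → Set F) (x : F) : Fin t → Bool := fun i => decide (x ∈ V i)

lemma mem_finalState_iff {rγ m : F} (hrγ : rγ ≠ 0) (hm : m ≠ 0) {V : Fin t → Set F}
    {bv : Fin t → Bool} :
    m ∈ finalState rγ V bv ↔ m ∈ B11 F ∧ bv = transcript V (rγ * m) := by
  have hx : rγ * m ≠ 0 := mul_ne_zero hrγ hm
  have himage : ∀ W : Set F, m ∈ (fun x => rγ⁻¹ * x) '' W ↔ rγ * m ∈ W := fun W => by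
    refine ⟨?_, fun h => ⟨_, h, by simp [hrγ]⟩⟩
    rintro ⟨x, hxW, rfl⟩
    simpa [hrγ] using hxW
  simp only [finalState, mem_sdiff, mem_iUnion, himage, not_exists, funext_iff, transcript]
  refine and_congr_right fun _ => forall_congr' fun i => ?_
  cases bv i <;> simp [hx]

def IsValidPQM (Ω : Set F) (r : F → F) (V : Fin t → Set F) : Prop :=
  ∀ bv : Fin t → Bool, ∀ γ ∈ Ω, ∀ γ' ∈ Ω,
    finalState (r γ) V bv ≠ ∅ → finalState (r γ') V bv ≠ ∅ → γ = γ'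

def scaledPairs (Ω : Set F) (r : F → F) (a b : F) : Set F :=
  ⋃ γ ∈ Ω, ({r γ * a, r γ * b} : Set F)

namespace IsValidPQM

variable {Ω : Set F} {r : F → F} {V : Fin t → Set F}

lemma eq_of_transcript_eq (hv : IsValidPQM Ω r V) (hr : ∀ γ ∈ Ω, r γ ≠ 0) {γ γ' m m' : F}
    (hγ : γ ∈ Ω) (hγ' : γ' ∈ Ω) (hm : m ∈ B11 F \ {0}) (hm' : m' ∈ B11 F \ {0})
    (h : transcript V (r γ * m) = transcript V (r γ' * m')) : γ = γ' :=
  hv _ γ hγ γ' hγ'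
    (nonempty_iff_ne_empty.1 ⟨m, (mem_finalState_iff (hr γ hγ) hm.2).2 ⟨hm.1, rfl⟩⟩)
    (nonempty_iff_ne_empty.1 ⟨m', (mem_finalState_iff (hr γ' hγ') hm'.2).2 ⟨hm'.1, h⟩⟩)

lemma eq_of_mul_eq (hv : IsValidPQM Ω r V) (hr : ∀ γ ∈ Ω, r γ ≠ 0) {γ γ' m m' : F}
    (hγ : γ ∈ Ω) (hγ' : γ' ∈ Ω) (hm : m ∈ B11 F \ {0}) (hm' : m' ∈ B11 F \ {0})
    (h : r γ * m = r γ' * m') : γ = γ' ∧ m = m' := by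
  obtain rfl := hv.eq_of_transcript_eq hr hγ hγ' hm hm' (congrArg _ h)
  exact ⟨rfl, mul_left_cancel₀ (hr γ hγ) h⟩

lemma ncard_mul_ncard_le [Finite F] (hv : IsValidPQM Ω r V) (hr : ∀ γ ∈ Ω, r γ ≠ 0)
    {M E : Set F} (hM : M ⊆ B11 F \ {0}) (g : F → F → F) (hgE : ∀ γ ∈ Ω, MapsTo (g γ) M E)
    (hg : ∀ γ ∈ Ω, InjOn (g γ) M) : Ω.ncard * M.ncard ≤ 2 ^ t * E.ncard := by
  calc Ω.ncard * M.ncard = (Ω ×ˢ M).ncard := ncard_prod.symm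
    _ ≤ ((univ : Set (Fin t → Bool)) ×ˢ E).ncard := by
      refine ncard_le_ncard_of_injOn (fun x => (transcript V (r x.1 * x.2), g x.1 x.2))
        (fun x hx => ⟨mem_univ _, hgE x.1 hx.1 hx.2⟩) ?_
      rintro ⟨γ, m⟩ ⟨hγ, hm⟩ ⟨γ', m'⟩ ⟨hγ', hm'⟩ h
      obtain ⟨htr, hgm⟩ := Prod.mk.inj h
      obtain rfl := hv.eq_of_transcript_eq hr hγ hγ' (hM hm) (hM hm') htr
      exact Prod.ext rfl (hg γ hγ hm hm' hgm)
    _ = 2 ^ t * E.ncard := by simp [ncard_prod]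

lemma mul_mem_compl_scaledPairs (hv : IsValidPQM Ω r V) (hr : ∀ γ ∈ Ω, r γ ≠ 0)
    {a b γ m : F} (ha : a ∈ B11 F \ {0}) (hb : b ∈ B11 F \ {0}) (hγ : γ ∈ Ω)
    (hm : m ∈ (B11 F \ {0}) \ {a, b}) : r γ * m ∈ {x | x ≠ 0} \ scaledPairs Ω r a b := by
  refine ⟨mul_ne_zero (hr γ hγ) hm.1.2, ?_⟩
  simp only [scaledPairs, mem_iUnion, mem_insert_iff, mem_singleton_iff, not_exists]
  rintro γ' hγ' (h | h)
  · exact hm.2 (Or.inl (hv.eq_of_mul_eq hr hγ hγ' hm.1 ha h).2)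
  · exact hm.2 (Or.inr (hv.eq_of_mul_eq hr hγ hγ' hm.1 hb h).2)

lemma ncard_mul_ncard_B11_le [Finite F] (hv : IsValidPQM Ω r V) (hr : ∀ γ ∈ Ω, r γ ≠ 0)
    {a b : F} (ha : a ∈ B11 F \ {0}) (hb : b ∈ B11 F \ {0}) :
    Ω.ncard * (B11 F \ {0}).ncard ≤ 2 ^ t * (2 + ({x | x ≠ 0} \ scaledPairs Ω r a b).ncard) := by
  set B := B11 F \ {0}
  have hab : ({a, b} : Set F).ncard ≤ 2 :=
    (ncard_insert_le a {b}).trans_eq (by rw [ncard_singleton])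
  have hpair : Ω.ncard * (B ∩ {a, b}).ncard ≤ 2 ^ t * ({a, b} : Set F).ncard :=
    hv.ncard_mul_ncard_le hr inter_subset_left (fun _ m => m) (fun _ _ _ hm => hm.2)
      fun _ _ => injOn_id _
  have hrest : Ω.ncard * (B \ {a, b}).ncard ≤
      2 ^ t * ({x | x ≠ 0} \ scaledPairs Ω r a b).ncard :=
    hv.ncard_mul_ncard_le hr sdiff_subset (fun γ m => r γ * m)
      (fun _ hγ _ hm => hv.mul_mem_compl_scaledPairs hr ha hb hγ hm)
      fun γ hγ => (mul_right_injective₀ (hr γ hγ)).injOn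
  calc Ω.ncard * B.ncard = Ω.ncard * (B ∩ {a, b}).ncard + Ω.ncard * (B \ {a, b}).ncard := by
        rw [← mul_add, ncard_inter_add_ncard_sdiff_eq_ncard]
    _ ≤ 2 ^ t * 2 + 2 ^ t * ({x | x ≠ 0} \ scaledPairs Ω r a b).ncard :=
        add_le_add (hpair.trans (Nat.mul_le_mul_left _ hab)) hrest
    _ = _ := by ring

lemma ncard_scaledPairs [Finite F] (hv : IsValidPQM Ω r V) (hr : ∀ γ ∈ Ω, r γ ≠ 0)
    {a b δ : F} (ha : a ∈ B11 F \ {0}) (hb : b ∈ B11 F \ {0}) (hab : a ≠ b) (hδ : δ ∈ Ω) :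
    (scaledPairs Ω r a b).ncard = (scaledPairs (Ω \ {δ}) r a b).ncard + 2 := by
  have hsplit : scaledPairs Ω r a b = {r δ * a, r δ * b} ∪ scaledPairs (Ω \ {δ}) r a b := by
    simpa only [scaledPairs, insert_sdiff_self_of_mem hδ] using
      biUnion_insert δ (Ω \ {δ}) fun γ => ({r γ * a, r γ * b} : Set F)
  have hdisj : Disjoint ({r δ * a, r δ * b} : Set F) (scaledPairs (Ω \ {δ}) r a b) := by
    refine disjoint_left.2 fun x hx hx' => ?_
    simp only [scaledPairs, mem_iUnion, mem_sdiff, mem_singleton_iff, mem_insert_iff] at hx'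
    obtain ⟨γ, ⟨hγ, hγδ⟩, hx'⟩ := hx'
    rcases hx with rfl | rfl <;> rcases hx' with h | h <;>
      exact hγδ (hv.eq_of_mul_eq hr hγ hδ (by assumption) (by assumption) h.symm).1
  rw [hsplit, ncard_union_eq hdisj, add_comm,
    ncard_pair fun h => hab (mul_left_cancel₀ (hr δ hδ) h)]

lemma ncard_mul_ncard_B11_le_card_sub [Fintype F] (hv : IsValidPQM Ω r V)
    (hr : ∀ γ ∈ Ω, r γ ≠ 0) {a b δ : F} (ha : a ∈ B11 F \ {0}) (hb : b ∈ B11 F \ {0})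
    (hab : a ≠ b) (hδ : δ ∈ Ω) :
    Ω.ncard * (B11 F \ {0}).ncard ≤
      2 ^ t * (Fintype.card F - 1 - (scaledPairs (Ω \ {δ}) r a b).ncard) := by
  have hsub : scaledPairs Ω r a b ⊆ {x | x ≠ 0} := by
    simp only [scaledPairs, iUnion_subset_iff, insert_subset_iff, singleton_subset_iff]
    exact fun γ hγ => ⟨mul_ne_zero (hr γ hγ) ha.2, mul_ne_zero (hr γ hγ) hb.2⟩
  have hle := ncard_le_ncard hsub
  have key := hv.ncard_mul_ncard_B11_le hr ha hb
  rw [ncard_sdiff hsub] at key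
  rw [ncard_setOf_ne_zero, hv.ncard_scaledPairs hr ha hb hab hδ] at key hle
  exact key.trans (Nat.mul_le_mul_left _ (by omega))

end IsValidPQM

end

lemma two_mul_logb_le_of_mul_le {n x y k : ℕ} (hx : n ≤ 2 * x) (hy : n ≤ 2 * y)
    (hxy : x * y ≤ 2 ^ k) :
    2 * Real.logb 2 n ≤ k + 2 := by
  rcases n.eq_zero_or_pos with rfl | hn
  · simp only [CharP.cast_eq_zero, Real.logb_zero, mul_zero]
    positivity
  have hsq : n ^ 2 ≤ 2 ^ (k + 2) := by
    calc n ^ 2 ≤ (2 * x) * (2 * y) := by rw [sq]; exact Nat.mul_le_mul hx hy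
      _ = 4 * (x * y) := by ring
      _ ≤ 4 * 2 ^ k := Nat.mul_le_mul_left _ hxy
      _ = 2 ^ (k + 2) := by ring
  have := Real.logb_le_logb_of_le (b := 2) one_lt_two (by positivity)
    (by exact_mod_cast hsq : ((n : ℝ) ^ 2) ≤ (2 : ℝ) ^ (k + 2))
  rw [Real.logb_pow, Real.logb_pow, Real.logb_self_eq_one one_lt_two] at this
  push_cast at this
  linarith

theorem pQM_round_complexity_lower_bound_general
    (F : Type*) [Field F] [Fintype F] (p e : ℕ)
    (hcard : Fintype.card F = p ^ e)
    (Ω : Set F)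
    (hΩodd : Odd p → Ω = QR F)
    (hΩeven : p = 2 → ∃ ω : F, orderOf ω = p ^ e - 1 ∧ Tr p e ω⁻¹ = 0 ∧ Ω = Wset F e ω)
    (r : F → F) (hr : ∀ γ ∈ Ω, r γ ≠ 0 ∧ (r γ) ^ 2 = γ)
    (a b : F) (ha : a ∈ Ω) (haB : a ∈ B11 F)
    (hb : b ≠ 0) (hbΩ : b ∉ Ω) (hbB : b ∈ B11 F)
    (hunion : ∀ δ ∈ Ω,
      (Odd p → (⋃ γ ∈ Ω \ {δ}, ({r γ * a, r γ * b} : Set F)).ncard = p ^ e - 3) ∧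
      (p = 2 → (⋃ γ ∈ Ω \ {δ}, ({r γ * a, r γ * b} : Set F)).ncard = p ^ e - 4))
    (t : ℕ)
    (V : Fin t → Set F)
    (hvalid : ∀ bv : Fin t → Bool, ∀ γ ∈ Ω, ∀ γ' ∈ Ω,
      finalState (r γ) V bv ≠ ∅ → finalState (r γ') V bv ≠ ∅ → γ = γ') :
    (Odd p → 2 * Real.logb 2 ((p : ℝ) ^ e - 1) - 3 ≤ (t : ℝ)) ∧
    (p = 2 → 2 * Real.logb 2 ((p : ℝ) ^ e - 2) - 4 ≤ (t : ℝ)) := by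
  have hr0 : ∀ γ ∈ Ω, r γ ≠ 0 := fun γ hγ => (hr γ hγ).1
  have ha0 : a ≠ 0 := (hr a ha).2 ▸ pow_ne_zero 2 (hr a ha).1
  have key := IsValidPQM.ncard_mul_ncard_B11_le_card_sub (V := V) hvalid hr0 ⟨haB, ha0⟩
    ⟨hbB, hb⟩ (ne_of_mem_of_not_mem ha hbΩ) ha
  have hB := card_sub_two_le_two_mul_ncard_B11_diff_zero (F := F)
  have hq : 2 ≤ p ^ e := hcard ▸ Fintype.one_lt_card
  rw [hcard] at key hB
  rw [scaledPairs] at key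
  constructor
  · intro hp
    have hqodd : p ^ e % 2 = 1 := Nat.odd_iff.1 hp.pow
    have hΩ : p ^ e - 1 ≤ 2 * Ω.ncard := by
      rw [hΩodd hp, ← hcard]
      exact card_sub_one_le_two_mul_ncard_QR
    have hB' : p ^ e - 1 ≤ 2 * (B11 F \ {0}).ncard := by omega
    rw [(hunion a ha).1 hp] at key
    have := two_mul_logb_le_of_mul_le (k := t + 1) hΩ hB'
      (key.trans (by rw [pow_succ]; gcongr; omega))
    rw [Nat.cast_sub (by omega)] at this
    push_cast at this ⊢
    linarith
  · rintro rfl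
    obtain ⟨ω, hω, -, rfl⟩ := hΩeven rfl
    rw [(hunion a ha).2 rfl] at key
    have hΩ := two_pow_sub_two_le_two_mul_ncard_Wset hω
    have := two_mul_logb_le_of_mul_le (k := t + 2) hΩ hB
      (key.trans (by rw [pow_add]; gcongr; omega))
    rw [Nat.cast_sub hq] at this
    push_cast at this ⊢
    linarith

/-- If the leakage sets `V_1,…,V_t` define a `t`-valid pQM scheme
(for every transcript, at most one `γ ∈ Ω_q` has a nonempty final state), then
`t ≥ 2·log₂(q−1) − 3` when `p` is odd, and `t ≥ 2·log₂(q−2) − 4` when `p = 2`. -/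
theorem pQM_round_complexity_lower_bound
    (F : Type*) [Field F] [Fintype F] (p e : ℕ) (hp : p.Prime)
    (hcard : Fintype.card F = p ^ e)
    (hcase : (Odd p ∧ p ^ e ≠ 5) ∨ (p = 2 ∧ 3 ≤ e))
    (Ω : Set F)
    (hΩodd : Odd p → Ω = QR F)
    (hΩeven : p = 2 → ∃ ω : F, orderOf ω = p ^ e - 1 ∧ Tr p e ω⁻¹ = 0 ∧ Ω = Wset F e ω)
    (r : F → F) (hr : ∀ γ ∈ Ω, r γ ≠ 0 ∧ (r γ) ^ 2 = γ)
    (a b : F) (ha : a ∈ Ω) (haB : a ∈ B11 F)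
    (hb : b ≠ 0) (hbΩ : b ∉ Ω) (hbB : b ∈ B11 F)
    (hunion : ∀ δ ∈ Ω,
      (Odd p → (⋃ γ ∈ Ω \ {δ}, ({r γ * a, r γ * b} : Set F)).ncard = p ^ e - 3) ∧
      (p = 2 → (⋃ γ ∈ Ω \ {δ}, ({r γ * a, r γ * b} : Set F)).ncard = p ^ e - 4))
    (t : ℕ) (ht : 0 < t)
    (V : Fin t → Set F)
    (hvalid : ∀ bv : Fin t → Bool, ∀ γ ∈ Ω, ∀ γ' ∈ Ω,
      finalState (r γ) V bv ≠ ∅ → finalState (r γ') V bv ≠ ∅ → γ = γ') :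
    (Odd p → 2 * Real.logb 2 ((p : ℝ) ^ e - 1) - 3 ≤ (t : ℝ)) ∧
    (p = 2 → 2 * Real.logb 2 ((p : ℝ) ^ e - 2) - 4 ≤ (t : ℝ)) :=
  pQM_round_complexity_lower_bound_general F p e hcard Ω hΩodd hΩeven r hr a b ha haB hb hbΩ hbB
    hunion t V hvalid
end
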